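/- Let R be a ring with 1 and let f be a morphism of abelian groups. Suppose that an f-localization functor L_f and an (R ⊗_ℤ f)-localization functor L_{R⊗f} exist on the category of abelian groups (where R ⊗_ℤ f denotes the morphism of abelian groups underlying the tensored map). Then for every left R-module M there is a natural isomorphism of abelian groups L_f(UM) ≅ L_{R⊗f}(UM), where U M denotes the underlying abelian group of M. -/

import Mathlib

open CategoryTheory

/-- An object `X` is `f`-local if precomposition with `f` gives a bijection
`C(B, X) → C(A, X)`. -/
def IsLocalWrt {C : Type*} [Category C] {A B : C} (f : A ⟶ B) (X : C) : Prop :=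
  Function.Bijective (fun g : B ⟶ X => f ≫ g)

/-- A morphism `g` is an `f`-equivalence if every `f`-local object is orthogonal to `g`. -/
def IsEquivWrt {C : Type*} [Category C] {A B : C} (f : A ⟶ B) {U V : C} (g : U ⟶ V) : Prop :=
  ∀ X : C, IsLocalWrt f X → Function.Bijective (fun h : V ⟶ X => g ≫ h)

/-- A localization (idempotent monad with invertible unit components `L l = l L`) on `C`. -/
structure LocalizationData (C : Type*) [Category C] where
  /-- the localization functor -/
  L : C ⥤ C
  /-- the unit -/
  l : 𝟭 C ⟶ L
  coincide : ∀ X : C, L.map (l.app X) = l.app (L.obj X)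
  isIso : ∀ X : C, IsIso (L.map (l.app X))

/-- An `f`-localization functor: a localization whose local objects (those `X` with `l_X` an
isomorphism) are exactly the `f`-local objects, and whose unit components are
`f`-equivalences. -/
structure FLocalization {C : Type*} [Category C] {A B : C} (f : A ⟶ B)
    extends LocalizationData C where
  local_iff : ∀ X : C, IsIso (l.app X) ↔ IsLocalWrt f X
  unit_isEquiv : ∀ X : C, IsEquivWrt f (l.app X)

/-- The endofunctor `M ↦ R ⊗_ℤ M` on the category of abelian groups, for a ring `R`. -/
noncomputable def tensorFunctor (R : Type) [Ring R] : AddCommGrpCat.{0} ⥤ AddCommGrpCat.{0} where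
  obj M := AddCommGrpCat.of (TensorProduct ℤ R M)
  map f := AddCommGrpCat.ofHom
    (TensorProduct.map (LinearMap.id : R →ₗ[ℤ] R) f.hom.toIntLinearMap).toAddMonoidHom
  map_id X := by
    show AddCommGrpCat.ofHom
      (TensorProduct.map (LinearMap.id : R →ₗ[ℤ] R)
        (AddMonoidHom.toIntLinearMap (AddCommGrpCat.Hom.hom (𝟙 X)))).toAddMonoidHom = _
    rw [show AddMonoidHom.toIntLinearMap (AddCommGrpCat.Hom.hom (𝟙 X)) = (LinearMap.id : _ →ₗ[ℤ] _) from rfl,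
      TensorProduct.map_id]
    rfl
  map_comp f g := by
    show AddCommGrpCat.ofHom
      (TensorProduct.map (LinearMap.id : R →ₗ[ℤ] R)
        (AddMonoidHom.toIntLinearMap (AddCommGrpCat.Hom.hom (f ≫ g)))).toAddMonoidHom = _
    rw [show AddMonoidHom.toIntLinearMap (AddCommGrpCat.Hom.hom (f ≫ g))
        = (AddMonoidHom.toIntLinearMap g.hom).comp (AddMonoidHom.toIntLinearMap f.hom) from rfl]
    rw [show (LinearMap.id : R →ₗ[ℤ] R)
        = (LinearMap.id : R →ₗ[ℤ] R).comp (LinearMap.id : R →ₗ[ℤ] R) from rfl]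
    rw [TensorProduct.map_comp]
    rfl

/-!
An abelian group `X` is `(R ⊗ f)`-local iff `Hom(R, X)` is `f`-local, by the tensor-hom
adjunction, and `Hom(R, -)` preserves `f`-local groups; so `L_f (U M)` is `(R ⊗ f)`-local.
The unit `U M → L_f (U M)` is also an `(R ⊗ f)`-equivalence: `U M` is a retract of
`Hom(R, U M)` via `m ↦ (r ↦ r • m)` and evaluation at `1`, and this retraction extends to
`L_f (U M)`, which lets one test maps out of `L_f (U M)` into `X` after applying `Hom(R, -)`,
where the target `Hom(R, X)` is `f`-local. Both `L_f (U M)` and `L_{R ⊗ f} (U M)` are thus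
`(R ⊗ f)`-localizations of `U M`, hence canonically isomorphic.
-/

section Localization

variable {C : Type*} [Category C] {A B : C} {f : A ⟶ B}

theorem FLocalization.isLocalWrt_obj (Lf : FLocalization f) (X : C) :
    IsLocalWrt f (Lf.L.obj X) :=
  (Lf.local_iff _).mp (Lf.coincide X ▸ Lf.isIso X)

theorem CategoryTheory.Adjunction.isLocalWrt_map_iff {D : Type*} [Category D] {F : C ⥤ D}
    {G : D ⥤ C} (adj : F ⊣ G) (f : A ⟶ B) (X : D) :
    IsLocalWrt (F.map f) X ↔ IsLocalWrt f (G.obj X) := by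
  have hcomm : adj.homEquiv A X ∘ (fun g : F.obj B ⟶ X => F.map f ≫ g) =
      (fun h => f ≫ h) ∘ adj.homEquiv B X :=
    funext (adj.homEquiv_naturality_left f)
  rw [IsLocalWrt, IsLocalWrt, ← (adj.homEquiv A X).comp_bijective, hcomm,
    (adj.homEquiv B X).bijective_comp]

namespace IsEquivWrt

variable {Y P Q : C} {u : Y ⟶ P}

noncomputable def desc (hu : IsEquivWrt f u) {X : C} (hX : IsLocalWrt f X) (h : Y ⟶ X) :
    P ⟶ X :=
  ((hu X hX).2 h).choose

theorem fac (hu : IsEquivWrt f u) {X : C} (hX : IsLocalWrt f X) (h : Y ⟶ X) :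
    u ≫ hu.desc hX h = h :=
  ((hu X hX).2 h).choose_spec

theorem hom_ext (hu : IsEquivWrt f u) {X : C} (hX : IsLocalWrt f X) {g g' : P ⟶ X}
    (h : u ≫ g = u ≫ g') : g = g' :=
  (hu X hX).1 h

noncomputable def uniqueUpToIso {v : Y ⟶ Q} (hu : IsEquivWrt f u) (hv : IsEquivWrt f v)
    (hP : IsLocalWrt f P) (hQ : IsLocalWrt f Q) : P ≅ Q where
  hom := hu.desc hQ v
  inv := hv.desc hP u
  hom_inv_id := hu.hom_ext hP (by rw [reassoc_of% hu.fac hQ v, hv.fac, Category.comp_id])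
  inv_hom_id := hv.hom_ext hQ (by rw [reassoc_of% hv.fac hP u, hu.fac, Category.comp_id])

theorem comp_uniqueUpToIso_hom {v : Y ⟶ Q} (hu : IsEquivWrt f u) (hv : IsEquivWrt f v)
    (hP : IsLocalWrt f P) (hQ : IsLocalWrt f Q) : u ≫ (hu.uniqueUpToIso hv hP hQ).hom = v :=
  hu.fac hQ v

theorem bijective_comp_of_section {H : C ⥤ C} (ε : H ⟶ 𝟭 C) (hu : IsEquivWrt f u)
    (hP : IsLocalWrt f P) (hHP : IsLocalWrt f (H.obj P)) {σ : Y ⟶ H.obj Y}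
    (hσ : σ ≫ ε.app Y = 𝟙 Y) {X : C} (hHX : IsLocalWrt f (H.obj X)) :
    Function.Bijective (fun g : P ⟶ X => u ≫ g) := by
  have hε {Z W : C} (g : Z ⟶ W) : H.map g ≫ ε.app W = ε.app Z ≫ g := ε.naturality g
  -- `τ` extends `σ` along `u` and is split by `ε`, so `g = τ ≫ H.map g ≫ ε.app X`.
  set τ := hu.desc hHP (σ ≫ H.map u)
  have hτ : τ ≫ ε.app P = 𝟙 P :=
    hu.hom_ext hP (by
      rw [reassoc_of% hu.fac hHP, Category.assoc, hε, reassoc_of% hσ, Category.comp_id])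
  refine ⟨fun g g' hgg => ?_, fun h => ⟨hu.desc hHX (σ ≫ H.map h) ≫ ε.app X, ?_⟩⟩
  · have hgg : u ≫ g = u ≫ g' := hgg
    have hH : τ ≫ H.map g = τ ≫ H.map g' :=
      hu.hom_ext hHX (by
        rw [reassoc_of% hu.fac hHP, reassoc_of% hu.fac hHP, Category.assoc, Category.assoc,
          ← H.map_comp, ← H.map_comp, hgg])
    calc g = τ ≫ H.map g ≫ ε.app X := by rw [hε, reassoc_of% hτ]
      _ = τ ≫ H.map g' ≫ ε.app X := by rw [reassoc_of% hH]
      _ = g' := by rw [hε, reassoc_of% hτ]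
  · simp only [reassoc_of% hu.fac hHX, Category.assoc, hε, reassoc_of% hσ]

theorem map_of_adjunction {F G : C ⥤ C} (adj : F ⊣ G) (ε : G ⟶ 𝟭 C) (hu : IsEquivWrt f u)
    (hP : IsLocalWrt f P) (hGP : IsLocalWrt f (G.obj P)) {σ : Y ⟶ G.obj Y}
    (hσ : σ ≫ ε.app Y = 𝟙 Y) : IsEquivWrt (F.map f) u := fun X hX =>
  hu.bijective_comp_of_section ε hP hGP hσ ((adj.isLocalWrt_map_iff f X).1 hX)

end IsEquivWrt

noncomputable def natIsoOfIsEquivWrt {D : Type*} [Category D] {K F₁ F₂ : D ⥤ C}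
    (α₁ : K ⟶ F₁) (α₂ : K ⟶ F₂) (h₁ : ∀ Y, IsEquivWrt f (α₁.app Y))
    (h₂ : ∀ Y, IsEquivWrt f (α₂.app Y)) (hF₁ : ∀ Y, IsLocalWrt f (F₁.obj Y))
    (hF₂ : ∀ Y, IsLocalWrt f (F₂.obj Y)) : F₁ ≅ F₂ :=
  NatIso.ofComponents (fun Y => (h₁ Y).uniqueUpToIso (h₂ Y) (hF₁ Y) (hF₂ Y))
    fun {Y Y'} φ => (h₁ Y).hom_ext (hF₂ Y') (by
      rw [← Category.assoc, ← α₁.naturality, Category.assoc,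
        IsEquivWrt.comp_uniqueUpToIso_hom, reassoc_of% IsEquivWrt.comp_uniqueUpToIso_hom,
        α₂.naturality])

end Localization

namespace AddCommGrpCat

def homFunctor (R : Type) [AddCommGroup R] : AddCommGrpCat.{0} ⥤ AddCommGrpCat.{0} where
  obj X := of (R →+ X)
  map g := ofHom (AddMonoidHom.compHom g.hom)

theorem isLocalWrt_homFunctor_obj (R : Type) [AddCommGroup R] {A B : AddCommGrpCat.{0}}
    {f : A ⟶ B} {X : AddCommGrpCat.{0}} (hX : IsLocalWrt f X) :
    IsLocalWrt f ((homFunctor R).obj X) := by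
  -- A map `Z ⟶ Hom(R, X)` is an additive family, indexed by `R`, of maps `Z ⟶ X`.
  let flipEquiv (Z : AddCommGrpCat.{0}) : (Z ⟶ (homFunctor R).obj X) ≃ (R →+ (Z ⟶ X)) :=
    { toFun ψ := homAddEquiv.symm.toAddMonoidHom.comp ψ.hom.flip
      invFun φ := ofHom (homAddEquiv.toAddMonoidHom.comp φ).flip
      left_inv _ := rfl
      right_inv _ := rfl }
  let e := (AddEquiv.ofBijective (Preadditive.leftComp X f) hX).addMonoidHomCongrRight (M := R)
  have hcomm : flipEquiv A ∘ (fun g : B ⟶ _ => f ≫ g) = e ∘ flipEquiv B := rfl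
  rw [IsLocalWrt, ← (flipEquiv A).comp_bijective, hcomm]
  exact e.bijective.comp (flipEquiv B).bijective

variable (R : Type) [Ring R]

def evalOne : homFunctor R ⟶ 𝟭 AddCommGrpCat.{0} where
  app X := ofHom (AddMonoidHom.eval 1)

def coaction (M : ModuleCat.{0} R) :
    (forget₂ (ModuleCat.{0} R) AddCommGrpCat).obj M ⟶
      (homFunctor R).obj ((forget₂ (ModuleCat.{0} R) AddCommGrpCat).obj M) :=
  ofHom (smulAddHom R M).flip

theorem coaction_comp_evalOne (M : ModuleCat.{0} R) :
    coaction R M ≫ (evalOne R).app _ = 𝟙 _ := by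
  ext m
  exact one_smul R (show M from m)

theorem tensorFunctor_hom_ext {C X : AddCommGrpCat.{0}} {γ γ' : (tensorFunctor R).obj C ⟶ X}
    (h : ∀ (r : R) (c : C), γ.hom (r ⊗ₜ c) = γ'.hom (r ⊗ₜ c)) : γ = γ' :=
  hom_ext (AddMonoidHom.toIntLinearMap_injective (TensorProduct.ext' h))

noncomputable def tensorHomEquiv (C X : AddCommGrpCat.{0}) :
    ((tensorFunctor R).obj C ⟶ X) ≃ (C ⟶ (homFunctor R).obj X) where
  toFun γ := ofHom (AddMonoidHom.mk'
    (fun c => AddMonoidHom.mk' (fun r => γ.hom (r ⊗ₜ c))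
      fun r s => (congrArg γ.hom (TensorProduct.add_tmul r s c)).trans (map_add γ.hom _ _))
    fun c c' => AddMonoidHom.ext fun r =>
      (congrArg γ.hom (TensorProduct.tmul_add r c c')).trans (map_add γ.hom _ _))
  invFun β := ofHom (TensorProduct.liftAddHom β.hom.flip fun z r c => by
    simp only [map_zsmul, AddMonoidHom.zsmul_apply])
  left_inv _ := tensorFunctor_hom_ext R fun _ _ => rfl
  right_inv _ := rfl

noncomputable def tensorHomAdjunction : tensorFunctor R ⊣ homFunctor R :=
  Adjunction.mkOfHomEquiv
    { homEquiv := tensorHomEquiv R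
      homEquiv_naturality_left_symm _ _ := tensorFunctor_hom_ext R fun _ _ => rfl
      homEquiv_naturality_right _ _ := rfl }

end AddCommGrpCat

/-- For a ring `R`, a morphism `f` of abelian groups, an `f`-localization
`L_f` and an `(R ⊗ f)`-localization `L_{R ⊗ f}` on abelian groups, there is a natural
isomorphism `L_f (U M) ≅ L_{R ⊗ f} (U M)` for left `R`-modules `M`, where `U` is the
underlying-abelian-group functor. -/
theorem Lf_iso_LRf_on_modules
    (R : Type) [Ring R] {A B : AddCommGrpCat.{0}} (f : A ⟶ B)
    (Lf : FLocalization f) (LRf : FLocalization ((tensorFunctor R).map f)) :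
    Nonempty ((forget₂ (ModuleCat.{0} R) AddCommGrpCat.{0}) ⋙ Lf.L ≅
      (forget₂ (ModuleCat.{0} R) AddCommGrpCat.{0}) ⋙ LRf.L) := by
  open AddCommGrpCat in
  have hHomLocal (Y : AddCommGrpCat.{0}) : IsLocalWrt f ((homFunctor R).obj (Lf.L.obj Y)) :=
    isLocalWrt_homFunctor_obj R (Lf.isLocalWrt_obj Y)
  refine ⟨natIsoOfIsEquivWrt (Functor.whiskerLeft _ Lf.l) (Functor.whiskerLeft _ LRf.l)
    (fun M => ?_) (fun _ => LRf.unit_isEquiv _)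
    (fun _ => ((tensorHomAdjunction R).isLocalWrt_map_iff f _).2 (hHomLocal _))
    (fun _ => LRf.isLocalWrt_obj _)⟩
  exact (Lf.unit_isEquiv _).map_of_adjunction (tensorHomAdjunction R) (evalOne R)
    (Lf.isLocalWrt_obj _) (hHomLocal _) (coaction_comp_evalOne R M)
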